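/- Let A₃ = ℤ³ be the A₃ root lattice with simple roots α₁,α₂,α₃ (Gram matrix with B₃(α_j,α_k) = 2δ_{j,k} − δ_{j,k+1} − δ_{j+1,k}), fundamental weights β₁ = (3α₁+2α₂+α₃)/4, β₂ = (α₁+2α₂+α₃)/2, β₃ = (α₁+2α₂+3α₃)/4, and μ₃(s) := (s₁β₁+s₂β₂+s₃β₃)/p for s ∈ ℤ³, p ∈ ℕ. Then: (1) A₃ + μ₃(s) = ⋃_{γ∈{0,1,2}} ( 4(ℤ + (3s₁+2s₂+s₃+4γp)/(12p)) β₁ + (ℤ + (2(s₂−γp)+s₃)/(3p)) α₂ + (ℤ + ((s₂−γp)+2s₃)/(3p)) α₃ ); (2) A₃ + μ₃(s) = ⋃_{δ∈{0,1}} ( 2(ℤ + (s₁+2s₂+s₃+2δp)/(4p)) β₂ + (ℤ + (s₁−δp)/(2p)) α₁ + (ℤ + (s₃−δp)/(2p)) α₃ ); (3) A₃ + μ₃(s) = ⋃_{γ∈{0,1,2}} ( 4(ℤ + (s₁+2s₂+3s₃+4γp)/(12p)) β₃ + (ℤ + (2s₁+(s₂−γp))/(3p)) α₁ + (ℤ +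 (s₁+2(s₂−γp))/(3p)) α₂ ), with all unions disjoint. -/

import Mathlib

noncomputable section

/-- The simple roots of `A₃` in the simple-root basis. -/
def al1 : Fin 3 → ℝ := ![1, 0, 0]
def al2 : Fin 3 → ℝ := ![0, 1, 0]
def al3 : Fin 3 → ℝ := ![0, 0, 1]

/-- The fundamental weights of `A₃`: `β₁ = (3α₁+2α₂+α₃)/4`, `β₂ = (α₁+2α₂+α₃)/2`,
`β₃ = (α₁+2α₂+3α₃)/4`. -/
def be1 : Fin 3 → ℝ := ![3/4, 1/2, 1/4]
def be2 : Fin 3 → ℝ := ![1/2, 1, 1/2]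
def be3 : Fin 3 → ℝ := ![1/4, 1/2, 3/4]

/-- The shift `μ₃(s) = (s₁β₁ + s₂β₂ + s₃β₃)/p`. -/
def mu3 (p : ℕ) (s : Fin 3 → ℤ) : Fin 3 → ℝ :=
  fun i => ((s 0 : ℝ) * be1 i + (s 1 : ℝ) * be2 i + (s 2 : ℝ) * be3 i) / p

/-- The shifted lattice `A₃ + μ₃(s)`. -/
def cosetA3 (p : ℕ) (s : Fin 3 → ℤ) : Set (Fin 3 → ℝ) :=
  {x | ∃ ν : Fin 3 → ℤ, x = (fun i => (ν i : ℝ)) + mu3 p s}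

/-- Pieces of the decomposition along `β₁` and its orthogonal complement. -/
def pc1 (p : ℕ) (s : Fin 3 → ℤ) (γ : ℤ) : Set (Fin 3 → ℝ) :=
  {x | ∃ a b c : ℤ,
    x = (4 * ((a : ℝ) +
          (3*(s 0 : ℝ) + 2*(s 1 : ℝ) + (s 2 : ℝ) + 4*(γ:ℝ)*(p:ℝ)) / (12*(p:ℝ)))) • be1 +
        ((b : ℝ) + (2*((s 1 : ℝ) - (γ:ℝ)*(p:ℝ)) + (s 2 : ℝ)) / (3*(p:ℝ))) • al2 +
        ((c : ℝ) + (((s 1 : ℝ) - (γ:ℝ)*(p:ℝ)) + 2*(s 2 : ℝ)) / (3*(p:ℝ))) • al3}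

/-- Pieces of the decomposition along `β₂` and its orthogonal complement. -/
def pc2 (p : ℕ) (s : Fin 3 → ℤ) (δ : ℤ) : Set (Fin 3 → ℝ) :=
  {x | ∃ a b c : ℤ,
    x = (2 * ((a : ℝ) +
          ((s 0 : ℝ) + 2*(s 1 : ℝ) + (s 2 : ℝ) + 2*(δ:ℝ)*(p:ℝ)) / (4*(p:ℝ)))) • be2 +
        ((b : ℝ) + ((s 0 : ℝ) - (δ:ℝ)*(p:ℝ)) / (2*(p:ℝ))) • al1 +
        ((c : ℝ) + ((s 2 : ℝ) - (δ:ℝ)*(p:ℝ)) / (2*(p:ℝ))) • al3}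

/-- Pieces of the decomposition along `β₃` and its orthogonal complement. -/
def pc3 (p : ℕ) (s : Fin 3 → ℤ) (γ : ℤ) : Set (Fin 3 → ℝ) :=
  {x | ∃ a b c : ℤ,
    x = (4 * ((a : ℝ) +
          ((s 0 : ℝ) + 2*(s 1 : ℝ) + 3*(s 2 : ℝ) + 4*(γ:ℝ)*(p:ℝ)) / (12*(p:ℝ)))) • be3 +
        ((b : ℝ) + (2*(s 0 : ℝ) + ((s 1 : ℝ) - (γ:ℝ)*(p:ℝ))) / (3*(p:ℝ))) • al1 +
        ((c : ℝ) + ((s 0 : ℝ) + 2*((s 1 : ℝ) - (γ:ℝ)*(p:ℝ))) / (3*(p:ℝ))) • al2}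

/-!
The map `ν ↦ ν + μ₃(s)` identifies `ℤ³` with `A₃ + μ₃(s)`. Expanding the coordinates, the point of
`pc1 p s γ` with integer parameters `(a, b, c)` is `ν + μ₃(s)` for `ν = (3a + γ, 2a + b, a + c)`, so
`pc1 p s γ` is the image of the lattice points with `ν₁ ≡ γ (mod 3)`; likewise `pc2 p s δ` is the image
of `ν₂ ≡ δ (mod 2)` via `ν = (a + b, 2a + δ, a + c)`, and `pc3 p s γ` that of `ν₃ ≡ γ (mod 3)` via
`ν = (a + b, 2a + c, 3a + γ)`. Residue classes partition `ℤ`, and the map is injective.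
-/

open Set

def shiftA3 (p : ℕ) (s : Fin 3 → ℤ) (ν : Fin 3 → ℤ) : Fin 3 → ℝ :=
  (fun i => (ν i : ℝ)) + mu3 p s

section Residues

variable {α : Type*} (g : α → ℤ)

lemma union_setOf_modEq_two : {x | g x ≡ 0 [ZMOD 2]} ∪ {x | g x ≡ 1 [ZMOD 2]} = univ := by
  ext x
  simp only [Int.ModEq, mem_union, mem_ofPred_eq, mem_univ, iff_true]
  omega

lemma union_setOf_modEq_three :
    {x | g x ≡ 0 [ZMOD 3]} ∪ {x | g x ≡ 1 [ZMOD 3]} ∪ {x | g x ≡ 2 [ZMOD 3]} = univ := by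
  ext x
  simp only [Int.ModEq, mem_union, mem_ofPred_eq, mem_univ, iff_true]
  omega

lemma disjoint_setOf_modEq {n a b : ℤ} (h : ¬a ≡ b [ZMOD n]) :
    Disjoint {x | g x ≡ a [ZMOD n]} {x | g x ≡ b [ZMOD n]} :=
  disjoint_left.2 fun _ ha hb => h (ha.symm.trans hb)

end Residues

section Pieces

variable {p : ℕ} (s : Fin 3 → ℤ)

lemma cosetA3_eq_range : cosetA3 p s = range (shiftA3 p s) :=
  ext fun _ => exists_congr fun _ => eq_comm

lemma shiftA3_injective : Function.Injective (shiftA3 p s) := fun ν ν' h =>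
  funext fun i => Int.cast_injective (α := ℝ) (by simpa [shiftA3] using congrFun h i)

lemma pc1_point_eq (hp : (p : ℝ) ≠ 0) (γ a b c : ℤ) :
    (4 * ((a : ℝ) +
          (3*(s 0 : ℝ) + 2*(s 1 : ℝ) + (s 2 : ℝ) + 4*(γ:ℝ)*(p:ℝ)) / (12*(p:ℝ)))) • be1 +
        ((b : ℝ) + (2*((s 1 : ℝ) - (γ:ℝ)*(p:ℝ)) + (s 2 : ℝ)) / (3*(p:ℝ))) • al2 +
        ((c : ℝ) + (((s 1 : ℝ) - (γ:ℝ)*(p:ℝ)) + 2*(s 2 : ℝ)) / (3*(p:ℝ))) • al3 =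
      shiftA3 p s ![3*a + γ, 2*a + b, a + c] := by
  funext i
  fin_cases i <;>
  · simp [shiftA3, mu3, be1, be2, be3, al2, al3]
    field_simp
    ring

lemma pc2_point_eq (hp : (p : ℝ) ≠ 0) (δ a b c : ℤ) :
    (2 * ((a : ℝ) +
          ((s 0 : ℝ) + 2*(s 1 : ℝ) + (s 2 : ℝ) + 2*(δ:ℝ)*(p:ℝ)) / (4*(p:ℝ)))) • be2 +
        ((b : ℝ) + ((s 0 : ℝ) - (δ:ℝ)*(p:ℝ)) / (2*(p:ℝ))) • al1 +
        ((c : ℝ) + ((s 2 : ℝ) - (δ:ℝ)*(p:ℝ)) / (2*(p:ℝ))) • al3 =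
      shiftA3 p s ![a + b, 2*a + δ, a + c] := by
  funext i
  fin_cases i <;>
  · simp [shiftA3, mu3, be1, be2, be3, al1, al3]
    field_simp
    ring

lemma pc3_point_eq (hp : (p : ℝ) ≠ 0) (γ a b c : ℤ) :
    (4 * ((a : ℝ) +
          ((s 0 : ℝ) + 2*(s 1 : ℝ) + 3*(s 2 : ℝ) + 4*(γ:ℝ)*(p:ℝ)) / (12*(p:ℝ)))) • be3 +
        ((b : ℝ) + (2*(s 0 : ℝ) + ((s 1 : ℝ) - (γ:ℝ)*(p:ℝ))) / (3*(p:ℝ))) • al1 +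
        ((c : ℝ) + ((s 0 : ℝ) + 2*((s 1 : ℝ) - (γ:ℝ)*(p:ℝ))) / (3*(p:ℝ))) • al2 =
      shiftA3 p s ![a + b, 2*a + c, 3*a + γ] := by
  funext i
  fin_cases i <;>
  · simp [shiftA3, mu3, be1, be2, be3, al1, al2]
    field_simp
    ring

lemma pc1_eq_image (hp : (p : ℝ) ≠ 0) (γ : ℤ) :
    pc1 p s γ = shiftA3 p s '' {ν | ν 0 ≡ γ [ZMOD 3]} := by
  ext x
  constructor
  · rintro ⟨a, b, c, rfl⟩
    exact ⟨_, by simp [Int.ModEq], (pc1_point_eq s hp γ a b c).symm⟩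
  · rintro ⟨ν, hν, rfl⟩
    obtain ⟨a, ha⟩ := hν.symm.dvd
    refine ⟨a, ν 1 - 2*a, ν 2 - a, ?_⟩
    rw [pc1_point_eq s hp]
    congr 1
    ext i
    fin_cases i <;> simp [← ha]

lemma pc2_eq_image (hp : (p : ℝ) ≠ 0) (δ : ℤ) :
    pc2 p s δ = shiftA3 p s '' {ν | ν 1 ≡ δ [ZMOD 2]} := by
  ext x
  constructor
  · rintro ⟨a, b, c, rfl⟩
    exact ⟨_, by simp [Int.ModEq], (pc2_point_eq s hp δ a b c).symm⟩
  · rintro ⟨ν, hν, rfl⟩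
    obtain ⟨a, ha⟩ := hν.symm.dvd
    refine ⟨a, ν 0 - a, ν 2 - a, ?_⟩
    rw [pc2_point_eq s hp]
    congr 1
    ext i
    fin_cases i <;> simp [← ha]

lemma pc3_eq_image (hp : (p : ℝ) ≠ 0) (γ : ℤ) :
    pc3 p s γ = shiftA3 p s '' {ν | ν 2 ≡ γ [ZMOD 3]} := by
  ext x
  constructor
  · rintro ⟨a, b, c, rfl⟩
    exact ⟨_, by simp [Int.ModEq], (pc3_point_eq s hp γ a b c).symm⟩
  · rintro ⟨ν, hν, rfl⟩
    obtain ⟨a, ha⟩ := hν.symm.dvd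
    refine ⟨a, ν 0 - a, ν 1 - 2*a, ?_⟩
    rw [pc3_point_eq s hp]
    congr 1
    ext i
    fin_cases i <;> simp [← ha]

end Pieces

/-- the three decompositions of the shifted lattice `A₃ + μ₃(s)` along
`β₁`, `β₂`, `β₃` and their orthogonal complements, with all unions disjoint. -/
theorem statement14 (p : ℕ) (hp : 0 < p) (s : Fin 3 → ℤ) :
    (cosetA3 p s = pc1 p s 0 ∪ pc1 p s 1 ∪ pc1 p s 2 ∧
      Disjoint (pc1 p s 0) (pc1 p s 1) ∧ Disjoint (pc1 p s 0) (pc1 p s 2) ∧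
      Disjoint (pc1 p s 1) (pc1 p s 2)) ∧
    (cosetA3 p s = pc2 p s 0 ∪ pc2 p s 1 ∧ Disjoint (pc2 p s 0) (pc2 p s 1)) ∧
    (cosetA3 p s = pc3 p s 0 ∪ pc3 p s 1 ∪ pc3 p s 2 ∧
      Disjoint (pc3 p s 0) (pc3 p s 1) ∧ Disjoint (pc3 p s 0) (pc3 p s 2) ∧
      Disjoint (pc3 p s 1) (pc3 p s 2)) := by
  have hp' : (p : ℝ) ≠ 0 := by positivity
  simp only [cosetA3_eq_range, pc1_eq_image s hp', pc2_eq_image s hp', pc3_eq_image s hp',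
    ← image_union, ← image_univ, union_setOf_modEq_two, union_setOf_modEq_three,
    disjoint_image_iff (shiftA3_injective s)]
  refine ⟨⟨trivial, ?_, ?_, ?_⟩, ⟨trivial, ?_⟩, ⟨trivial, ?_, ?_, ?_⟩⟩ <;>
    exact disjoint_setOf_modEq _ (by decide)
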